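/- arXiv:2102.10907 — 2 statements merged into one kernel-verified Lean document; each statement's English description precedes it below -/
import Mathlib

section
/- Let n ≥ 1, let φ : ℝⁿ → ℝⁿ be twice continuously differentiable, and let p : ℝⁿ → ℝ be continuously differentiable. With F(X) the Jacobian matrix of φ (entries F(X)_{a i} = ∂φᵃ/∂Xⁱ) and adj F its adjugate, for every index a ∈ {1,…,n} and every X ∈ ℝⁿ one has Σ_{i=1}^{n} ∂/∂Xⁱ [ p(φ(X)) · (adj F(X))_{i a} ] = det(F(X)) · (∂p/∂xᵃ)(φ(X)). -/
/-!
By the product rule the left-hand side is `p(φ X) · ∑ᵢ ∂ᵢ (adj F)ᵢₐ + ∑ᵢ ∂ᵢ(p ∘ φ) · (adj F)ᵢₐ`.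

The first sum vanishes (Piola identity). Since `(adj F)ᵢₐ` is the determinant of `F` with row `a`
replaced by `eᵢ`, differentiating it row by row turns `∑ᵢ ∂ᵢ (adj F)ᵢₐ` into a sum over the other
rows `b` of `∑ᵢⱼ ∂ᵢ∂ⱼφᵇ · det(F with rows a, b replaced by eᵢ, eⱼ)`: a symmetric tensor (equality
of mixed partials) contracted with an antisymmetric one.

By the chain rule the second sum is the `a`-th entry of `(∇p ∘ φ)ᵀ F adj F = det F (∇p ∘ φ)ᵀ`.
-/

open Matrix

namespace Matrix

variable {𝕜 R ι : Type*} [Fintype ι]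

theorem sum_sum_mul_eq_zero_of_isSymm_of_antisymm [CommRing R] [NoZeroDivisors R] [CharZero R]
    {S T : Matrix ι ι R} (hS : S.IsSymm) (hT : Tᵀ = -T) : ∑ i, ∑ j, S i j * T i j = 0 := by
  have hT' (i j : ι) : T j i = -T i j := congrFun (congrFun hT i) j
  refine CharZero.eq_neg_self_iff.mp ?_
  calc ∑ i, ∑ j, S i j * T i j = ∑ j, ∑ i, S i j * T i j := Finset.sum_comm
    _ = ∑ j, ∑ i, -(S j i * T j i) := by
      refine Finset.sum_congr rfl fun j _ => Finset.sum_congr rfl fun i _ => ?_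
      rw [hT', hS.apply, mul_neg]
    _ = -∑ i, ∑ j, S i j * T i j := by simp only [Finset.sum_neg_distrib]

variable [DecidableEq ι]

section CommRing

variable [CommRing R]

theorem det_updateRow_updateRow_swap {a b : ι} (hab : a ≠ b) (M : Matrix ι ι R) (u w : ι → R) :
    ((M.updateRow a u).updateRow b w).det = -((M.updateRow a w).updateRow b u).det := by
  have hswap : ((M.updateRow a u).updateRow b w).submatrix (Equiv.swap a b) id =
      (M.updateRow a w).updateRow b u := by
    ext k l
    rcases eq_or_ne k a with rfl | hka
    · simp [updateRow_apply, hab]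
    rcases eq_or_ne k b with rfl | hkb
    · simp [updateRow_apply, hab]
    · simp [updateRow_apply, Equiv.swap_apply_of_ne_of_ne hka hkb, hka, hkb]
  rw [← hswap, det_permute, Equiv.Perm.sign_swap hab]
  simp

theorem det_updateRow_eq_sum_mul (M : Matrix ι ι R) (b : ι) (w : ι → R) :
    (M.updateRow b w).det = ∑ j, w j * (M.updateRow b (Pi.single j 1)).det := by
  let row : (ι → R) →ₗ[R] R := (detRowAlternating : (ι → R) [⋀^ι]→ₗ[R] R).toLinearMap M b
  have hrow (u : ι → R) : (M.updateRow b u).det = row u := rfl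
  conv_lhs => rw [pi_eq_sum_univ' w]
  simp only [hrow, map_sum, map_smul, smul_eq_mul]

theorem sum_det_updateRow_single_updateRow_eq_zero [NoZeroDivisors R] [CharZero R] {a b : ι}
    (hab : a ≠ b) (M : Matrix ι ι R) {S : Matrix ι ι R} (hS : S.IsSymm) :
    ∑ i, ((M.updateRow a (Pi.single i 1)).updateRow b (S i)).det = 0 := by
  simp_rw [det_updateRow_eq_sum_mul _ b (S _)]
  refine sum_sum_mul_eq_zero_of_isSymm_of_antisymm hS
    (T := of fun i j => ((M.updateRow a (Pi.single i 1)).updateRow b (Pi.single j 1)).det) ?_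
  ext i j
  exact det_updateRow_updateRow_swap hab _ _ _

theorem vecMul_vecMul_adjugate (v : ι → R) (A : Matrix ι ι R) :
    v ᵥ* A ᵥ* A.adjugate = A.det • v := by
  rw [vecMul_vecMul, mul_adjugate, vecMul_smul, vecMul_one]

end CommRing

section Calculus

variable [NontriviallyNormedField 𝕜]

variable (𝕜 ι) in
def detRowContinuousMultilinear : ContinuousMultilinearMap 𝕜 (fun _ : ι => ι → 𝕜) 𝕜 :=
  { (detRowAlternating : (ι → 𝕜) [⋀^ι]→ₗ[𝕜] 𝕜).toMultilinearMap with
    cont := continuous_id.matrix_det }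

theorem detRowContinuousMultilinear_toContinuousLinearMap_apply (M : Matrix ι ι 𝕜) (b : ι)
    (w : ι → 𝕜) :
    (detRowContinuousMultilinear 𝕜 ι).toContinuousLinearMap M b w = (M.updateRow b w).det :=
  rfl

variable {E : Type*} [NormedAddCommGroup E] [NormedSpace 𝕜 E]

theorem _root_.HasFDerivAt.matrix_det {M : E → Matrix ι ι 𝕜} {M' : ι → E →L[𝕜] (ι → 𝕜)}
    {x : E} (hM : ∀ b, HasFDerivAt (fun y => M y b) (M' b) x) :
    HasFDerivAt (fun y => (M y).det)
      (∑ b, (detRowContinuousMultilinear 𝕜 ι).toContinuousLinearMap (M x) b ∘L M' b) x :=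
  HasFDerivAt.multilinear_comp (detRowContinuousMultilinear 𝕜 ι) hM

theorem _root_.HasFDerivAt.matrix_adjugate_apply {M : E → Matrix ι ι 𝕜}
    {M' : ι → E →L[𝕜] (ι → 𝕜)} {x : E} (hM : ∀ b, HasFDerivAt (fun y => M y b) (M' b) x)
    (i a : ι) :
    HasFDerivAt (fun y => (M y).adjugate i a)
      (∑ b, (detRowContinuousMultilinear 𝕜 ι).toContinuousLinearMap
        ((M x).updateRow a (Pi.single i 1)) b ∘L Function.update M' a 0 b) x := by
  simp only [adjugate_apply]
  refine HasFDerivAt.matrix_det fun b => ?_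
  rcases eq_or_ne b a with rfl | hba
  · simpa using hasFDerivAt_const (𝕜 := 𝕜) (Pi.single i 1 : ι → 𝕜) x
  · simpa [hba] using hM b

/-- The Piola identity, for any matrix field whose rows are closed one-forms. -/
theorem sum_fderiv_adjugate_apply_single_eq_zero [CharZero 𝕜] {M : (ι → 𝕜) → Matrix ι ι 𝕜}
    {M' : ι → (ι → 𝕜) →L[𝕜] (ι → 𝕜)} {x : ι → 𝕜}
    (hM : ∀ b, HasFDerivAt (fun y => M y b) (M' b) x)
    (hM' : ∀ b i j, M' b (Pi.single i 1) j = M' b (Pi.single j 1) i) (a : ι) :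
    ∑ i, fderiv 𝕜 (fun y => (M y).adjugate i a) x (Pi.single i 1) = 0 := by
  calc ∑ i, fderiv 𝕜 (fun y => (M y).adjugate i a) x (Pi.single i 1)
    _ = ∑ i, ∑ b, (((M x).updateRow a (Pi.single i 1)).updateRow b
          (Function.update M' a 0 b (Pi.single i 1))).det := by
        refine Finset.sum_congr rfl fun i _ => ?_
        simp [(HasFDerivAt.matrix_adjugate_apply hM i a).fderiv,
          detRowContinuousMultilinear_toContinuousLinearMap_apply]
    _ = ∑ b, ∑ i, (((M x).updateRow a (Pi.single i 1)).updateRow b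
          (Function.update M' a 0 b (Pi.single i 1))).det := Finset.sum_comm
    _ = 0 := by
        refine Finset.sum_eq_zero fun b _ => ?_
        rcases eq_or_ne b a with rfl | hba
        · exact Finset.sum_eq_zero fun i _ => det_eq_zero_of_row_eq_zero b fun j => by simp
        · simp only [Function.update_of_ne hba]
          exact sum_det_updateRow_single_updateRow_eq_zero hba.symm (M x)
            (S := of fun i j => M' b (Pi.single i 1) j) (by ext i j; simp [hM'])

end Calculus

end Matrix

section Jacobian

variable {𝕜 ι κ : Type*} [NontriviallyNormedField 𝕜] [Fintype ι] [DecidableEq ι]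

noncomputable def jacobianMatrix (φ : (ι → 𝕜) → κ → 𝕜) (x : ι → 𝕜) : Matrix κ ι 𝕜 :=
  LinearMap.toMatrix' (fderiv 𝕜 φ x : (ι → 𝕜) →ₗ[𝕜] κ → 𝕜)

theorem jacobianMatrix_apply (φ : (ι → 𝕜) → κ → 𝕜) (x : ι → 𝕜) (a : κ) (i : ι) :
    jacobianMatrix φ x a i = fderiv 𝕜 φ x (Pi.single i 1) a :=
  LinearMap.toMatrix'_apply _ _ _

theorem hasFDerivAt_jacobianMatrix_row [Fintype κ] {φ : (ι → 𝕜) → κ → 𝕜} {x : ι → 𝕜}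
    (h : DifferentiableAt 𝕜 (fderiv 𝕜 φ) x) (b : κ) :
    HasFDerivAt (fun y => jacobianMatrix φ y b)
      (ContinuousLinearMap.pi fun j =>
        ContinuousLinearMap.proj b ∘L (fderiv 𝕜 (fderiv 𝕜 φ) x).flip (Pi.single j 1)) x := by
  refine hasFDerivAt_pi.2 fun j => ?_
  simp only [jacobianMatrix_apply]
  exact (ContinuousLinearMap.proj b ∘L
    ContinuousLinearMap.apply 𝕜 (κ → 𝕜) (Pi.single j 1)).hasFDerivAt.comp x h.hasFDerivAt

theorem fderiv_comp_apply_single_eq_vecMul_jacobianMatrix [Fintype κ] [DecidableEq κ]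
    {p : (κ → 𝕜) → 𝕜} {φ : (ι → 𝕜) → κ → 𝕜} {x : ι → 𝕜} (hp : DifferentiableAt 𝕜 p (φ x))
    (hφ : DifferentiableAt 𝕜 φ x) :
    (fun i => fderiv 𝕜 (fun y => p (φ y)) x (Pi.single i 1)) =
      (fun b => fderiv 𝕜 p (φ x) (Pi.single b 1)) ᵥ* jacobianMatrix φ x := by
  funext i
  rw [fderiv_fun_comp x hp hφ, ContinuousLinearMap.comp_apply,
    pi_eq_sum_univ' (fderiv 𝕜 φ x (Pi.single i 1))]
  simp [vecMul, dotProduct, jacobianMatrix_apply, mul_comm]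

end Jacobian

theorem sum_fderiv_adjugate_jacobianMatrix_apply_single_eq_zero {𝕜 ι : Type*} [RCLike 𝕜]
    [Fintype ι] [DecidableEq ι] {φ : (ι → 𝕜) → ι → 𝕜} {x : ι → 𝕜} (hφ : ContDiffAt 𝕜 2 φ x)
    (a : ι) :
    ∑ i, fderiv 𝕜 (fun y => (jacobianMatrix φ y).adjugate i a) x (Pi.single i 1) = 0 := by
  have hD : DifferentiableAt 𝕜 (fderiv 𝕜 φ) x :=
    (hφ.fderiv_right (m := 1) le_rfl).differentiableAt one_ne_zero
  have hsymm : IsSymmSndFDerivAt 𝕜 φ x := hφ.isSymmSndFDerivAt (by simp)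
  refine Matrix.sum_fderiv_adjugate_apply_single_eq_zero (hasFDerivAt_jacobianMatrix_row hD)
    (fun b i j => ?_) a
  simp [hsymm (Pi.single i 1) (Pi.single j 1)]

theorem material_divergence_of_pressure_term_general
    (n : ℕ)
    (φ : (Fin n → ℝ) → (Fin n → ℝ)) (hφ : ContDiff ℝ 2 φ)
    (p : (Fin n → ℝ) → ℝ) (hp : ContDiff ℝ 1 p)
    (F : (Fin n → ℝ) → Matrix (Fin n) (Fin n) ℝ)
    (hF : ∀ X a i, F X a i = fderiv ℝ φ X (Pi.single i 1) a) :
    ∀ (a : Fin n) (X : Fin n → ℝ),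
      ∑ i : Fin n, fderiv ℝ (fun Y => p (φ Y) * (F Y).adjugate i a) X (Pi.single i 1)
        = (F X).det * fderiv ℝ p (φ X) (Pi.single a 1) := by
  intro a X
  obtain rfl : F = jacobianMatrix φ :=
    funext fun Y => Matrix.ext fun b i => by rw [hF, jacobianMatrix_apply]
  have hφX : DifferentiableAt ℝ φ X := hφ.differentiable two_ne_zero X
  have hpX : DifferentiableAt ℝ p (φ X) := hp.differentiable one_ne_zero (φ X)
  have hpφ : DifferentiableAt ℝ (fun Y => p (φ Y)) X := hpX.comp X hφX
  have hD : DifferentiableAt ℝ (fderiv ℝ φ) X :=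
    (hφ.fderiv_right (m := 1) le_rfl).differentiable one_ne_zero X
  have hadj (i : Fin n) : DifferentiableAt ℝ (fun Y => (jacobianMatrix φ Y).adjugate i a) X :=
    (HasFDerivAt.matrix_adjugate_apply (hasFDerivAt_jacobianMatrix_row hD) i a).differentiableAt
  calc ∑ i, fderiv ℝ (fun Y => p (φ Y) * (jacobianMatrix φ Y).adjugate i a) X (Pi.single i 1)
    _ = p (φ X) * ∑ i, fderiv ℝ (fun Y => (jacobianMatrix φ Y).adjugate i a) X (Pi.single i 1) +
          ∑ i, fderiv ℝ (fun Y => p (φ Y)) X (Pi.single i 1) *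
            (jacobianMatrix φ X).adjugate i a := by
      rw [Finset.mul_sum, ← Finset.sum_add_distrib]
      refine Finset.sum_congr rfl fun i _ => ?_
      rw [fderiv_fun_mul hpφ (hadj i)]
      simp only [_root_.add_apply, _root_.smul_apply, smul_eq_mul]
      ring
    _ = ((fun i => fderiv ℝ (fun Y => p (φ Y)) X (Pi.single i 1)) ᵥ*
          (jacobianMatrix φ X).adjugate) a := by
      rw [sum_fderiv_adjugate_jacobianMatrix_apply_single_eq_zero hφ.contDiffAt, mul_zero, zero_add]
      rfl
    _ = (jacobianMatrix φ X).det * fderiv ℝ p (φ X) (Pi.single a 1) := by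
      rw [fderiv_comp_apply_single_eq_vecMul_jacobianMatrix hpX hφX, vecMul_vecMul_adjugate]
      rfl

/-- Reference-configuration form of the pressure-gradient term: for `φ : ℝⁿ → ℝⁿ`
twice continuously differentiable with Jacobian matrix `F(X)_{a i} = ∂φᵃ/∂Xⁱ(X)` and
`p : ℝⁿ → ℝ` continuously differentiable,
`∑ᵢ ∂/∂Xⁱ [ p(φ(X)) (adj F(X))_{i a} ] = det F(X) · (∂p/∂xᵃ)(φ(X))`. -/
theorem material_divergence_of_pressure_term
    (n : ℕ) (hn : 1 ≤ n)
    (φ : (Fin n → ℝ) → (Fin n → ℝ)) (hφ : ContDiff ℝ 2 φ)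
    (p : (Fin n → ℝ) → ℝ) (hp : ContDiff ℝ 1 p)
    (F : (Fin n → ℝ) → Matrix (Fin n) (Fin n) ℝ)
    (hF : ∀ X a i, F X a i = fderiv ℝ φ X (Pi.single i 1) a) :
    ∀ (a : Fin n) (X : Fin n → ℝ),
      ∑ i : Fin n, fderiv ℝ (fun Y => p (φ Y) * (F Y).adjugate i a) X (Pi.single i 1)
        = (F X).det * fderiv ℝ p (φ X) (Pi.single a 1) :=
  material_divergence_of_pressure_term_general n φ hφ p hp F hF
end

section
/- Discrete Noether theorem for rotations (2D): let 𝕁 : ℝ² → ℝ² be the rotation by π/2, 𝕁(x₁,x₂) := (−x₂, x₁), and assume the cell Lagrangian L is rotation-invariant, i.e. L(Rx₁, …, Rx₈) = L(x₁, …, x₈) for every rotation matrix R ∈ SO(2) and all (x₁,…,x₈) ∈ (ℝ²)⁸. If the discrete field φ satisfies the discrete Euler–Lagrange node equations at every node (j,a,b) with 0 < j < N, then the total discrete angular momentum 𝐉_r^j := Σ_{a=0}^{A−1} Σ_{b=0}^{B−1} Σ_{p ∈ {2,4,6,8}} ⟨ D_pL(j¹φ(□^j_{a,b})), 𝕁 x_p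 ⟩ ∈ ℝ, where x_p denotes the p-th entry of j¹φ(□^j_{a,b}), satisfies 𝐉_r^{j+1} = 𝐉_r^j for all 0 ≤ j ≤ N−2. -/
open scoped RealInnerProductSpace

noncomputable section

/-- The plane `ℝ²` as a Euclidean space. -/
abbrev E2 : Type := EuclideanSpace ℝ (Fin 2)

/-- The rotation of `ℝ²` by `π/2`: `𝕁(x₁,x₂) = (-x₂, x₁)`. -/
noncomputable def Jrot (x : E2) : E2 := WithLp.toLp 2 ![-(x 1), x 0]

/-- Partial gradient `D_pL ∈ ℝ²` of a cell Lagrangian `L` in its `p`-th slot. -/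
noncomputable def pgrad {k : ℕ} (L : (Fin k → E2) → ℝ) (x : Fin k → E2) (p : Fin k) : E2 :=
  gradient (fun y => L (Function.update x p y)) (x p)

/-- The node of the cell `□^j_{a,b}` occupied by slot `s` (slots `0,…,7` correspond to
the paper's slots `1,…,8`). -/
def cellNode (j a b : ℕ) (s : Fin 8) : ℕ × ℕ × ℕ :=
  (j + s.val % 2, a + (s.val / 2) % 2, b + s.val / 4)

/-- First jet of the discrete field on the cell `□^j_{a,b}`. -/
def jet (φ : ℕ → ℕ → ℕ → E2) (j a b : ℕ) : Fin 8 → E2 :=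
  fun s => φ (j + s.val % 2) (a + (s.val / 2) % 2) (b + s.val / 4)

/-- Sum of `D_pL(j¹φ(□))` over all pairs `(□, p)` such that the given node is incident
to `□` in slot `p`. -/
noncomputable def delSum (N A B : ℕ) (L : (Fin 8 → E2) → ℝ) (φ : ℕ → ℕ → ℕ → E2)
    (nd : ℕ × ℕ × ℕ) : E2 :=
  ∑ j' ∈ Finset.range N, ∑ a' ∈ Finset.range A, ∑ b' ∈ Finset.range B, ∑ s : Fin 8,
    if cellNode j' a' b' s = nd then pgrad L (jet φ j' a' b') s else 0

/-- Total discrete angular momentum at time level `j`: the sum over all cells of time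
level `j`, over the paper slots `p ∈ {2,4,6,8}` (slots `1,3,5,7` here), of
`⟨D_pL(j¹φ(□^j_{a,b})), 𝕁 x_p⟩`. -/
noncomputable def Jang (A B : ℕ) (L : (Fin 8 → E2) → ℝ) (φ : ℕ → ℕ → ℕ → E2) (j : ℕ) : ℝ :=
  ∑ a ∈ Finset.range A, ∑ b ∈ Finset.range B,
    (⟪pgrad L (jet φ j a b) 1, Jrot (jet φ j a b 1)⟫
      + ⟪pgrad L (jet φ j a b) 3, Jrot (jet φ j a b 3)⟫
      + ⟪pgrad L (jet φ j a b) 5, Jrot (jet φ j a b 5)⟫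
      + ⟪pgrad L (jet φ j a b) 7, Jrot (jet φ j a b 7)⟫)

/-! Differentiating the invariance `L (R_θ x) = L x` at `θ = 0`, where `d/dθ R_θ = 𝕁`, gives
`∑ p, ⟪D_pL(x), 𝕁 x_p⟫ = 0` on every cell: the angular momentum through the lower (time `j`)
slots of a cell is minus the one through its upper (time `j + 1`) slots. Pair the Euler–Lagrange
equation at each node of level `j + 1` with `𝕁 φ` at that node and sum over these nodes: every cell
of level `j` contributes through its upper slots and every cell of level `j + 1` through its lower
slots, so the sum, which vanishes, is `𝐉^j - 𝐉^{j+1}`. -/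

open Finset Real

def rotationMatrix (θ : ℝ) : Matrix (Fin 2) (Fin 2) ℝ := !![cos θ, -sin θ; sin θ, cos θ]

lemma rotationMatrix_mem_specialOrthogonalGroup (θ : ℝ) :
    rotationMatrix θ ∈ Matrix.specialOrthogonalGroup (Fin 2) ℝ := by
  refine Matrix.mem_specialOrthogonalGroup_iff.2 ⟨(Matrix.mem_orthogonalGroup_iff _ _).2 ?_, ?_⟩
  · ext i j
    fin_cases i <;> fin_cases j <;>
      simp [rotationMatrix, Matrix.mul_apply, Fin.sum_univ_two] <;> ring_nf <;> simp
  · simp [rotationMatrix, Matrix.det_fin_two, ← sq, cos_sq_add_sin_sq]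

lemma toEuclideanLin_rotationMatrix (θ : ℝ) (v : E2) :
    Matrix.toEuclideanLin (rotationMatrix θ) v = cos θ • v + sin θ • Jrot v := by
  ext i
  fin_cases i <;> simp [rotationMatrix, Jrot, Matrix.toLpLin_apply, dotProduct, Fin.sum_univ_two]
  ring

lemma hasDerivAt_toEuclideanLin_rotationMatrix (v : E2) :
    HasDerivAt (fun θ => Matrix.toEuclideanLin (rotationMatrix θ) v) (Jrot v) 0 := by
  have h := ((hasDerivAt_cos 0).smul_const v).add ((hasDerivAt_sin 0).smul_const (Jrot v))
  simp only [sin_zero, neg_zero, zero_smul, cos_zero, one_smul, zero_add] at h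
  simp only [toEuclideanLin_rotationMatrix]
  exact h

lemma inner_pgrad {k : ℕ} {L : (Fin k → E2) → ℝ} {x : Fin k → E2} (hL : DifferentiableAt ℝ L x)
    (p : Fin k) (v : E2) : ⟪pgrad L x p, v⟫ = fderiv ℝ L x (Pi.single p v) := by
  have hL' : HasFDerivAt L (fderiv ℝ L x) (Function.update x p (x p)) := by
    rw [Function.update_eq_self]; exact hL.hasFDerivAt
  have h : HasFDerivAt (fun y => L (Function.update x p y))
      ((fderiv ℝ L x).comp (.pi (Pi.single p (.id ℝ E2)))) (x p) :=
    hL'.comp (x p) (hasFDerivAt_update x (x p))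
  rw [pgrad, gradient, h.fderiv, InnerProductSpace.toDual_symm_apply]
  refine congrArg (fderiv ℝ L x) (funext fun i => ?_)
  by_cases hi : i = p
  · subst hi; simp
  · simp [hi]

def RotationInvariantAt {k : ℕ} (L : (Fin k → E2) → ℝ) (x : Fin k → E2) : Prop :=
  ∀ R : Matrix.specialOrthogonalGroup (Fin 2) ℝ,
    L (fun p => Matrix.toEuclideanLin (R : Matrix (Fin 2) (Fin 2) ℝ) (x p)) = L x

lemma fderiv_apply_Jrot_eq_zero {k : ℕ} {L : (Fin k → E2) → ℝ} {x : Fin k → E2}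
    (hL : DifferentiableAt ℝ L x) (hinv : RotationInvariantAt L x) :
    fderiv ℝ L x (fun p => Jrot (x p)) = 0 := by
  have hrot : HasDerivAt (fun θ p => Matrix.toEuclideanLin (rotationMatrix θ) (x p))
      (fun p => Jrot (x p)) 0 :=
    hasDerivAt_pi.2 fun p => hasDerivAt_toEuclideanLin_rotationMatrix (x p)
  have hderiv :=
    hL.hasFDerivAt.comp_hasDerivAt_of_eq 0 hrot (by simp [toEuclideanLin_rotationMatrix])
  have hconst : (fun θ => L (fun p => Matrix.toEuclideanLin (rotationMatrix θ) (x p))) =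
      fun _ => L x :=
    funext fun θ => hinv ⟨rotationMatrix θ, rotationMatrix_mem_specialOrthogonalGroup θ⟩
  rw [Function.comp_def, hconst] at hderiv
  exact hderiv.unique (hasDerivAt_const 0 (L x))

lemma sum_inner_pgrad_Jrot_eq_zero {k : ℕ} {L : (Fin k → E2) → ℝ} {x : Fin k → E2}
    (hL : DifferentiableAt ℝ L x) (hinv : RotationInvariantAt L x) :
    ∑ s, ⟪pgrad L x s, Jrot (x s)⟫ = 0 := by
  simp only [inner_pgrad hL]
  rw [← map_sum, univ_sum_single]
  exact fderiv_apply_Jrot_eq_zero hL hinv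

def slotAngularMomentum (L : (Fin 8 → E2) → ℝ) (φ : ℕ → ℕ → ℕ → E2) (j a b : ℕ) (s : Fin 8) :
    ℝ :=
  ⟪pgrad L (jet φ j a b) s, Jrot (jet φ j a b s)⟫

lemma Jang_eq_sum_slotAngularMomentum (A B : ℕ) (L : (Fin 8 → E2) → ℝ) (φ : ℕ → ℕ → ℕ → E2)
    (j : ℕ) :
    Jang A B L φ j = ∑ a ∈ range A, ∑ b ∈ range B,
      (slotAngularMomentum L φ j a b 1 + slotAngularMomentum L φ j a b 3 +
        slotAngularMomentum L φ j a b 5 + slotAngularMomentum L φ j a b 7) := rfl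

lemma slotAngularMomentum_even_eq_neg_odd {L : (Fin 8 → E2) → ℝ} {φ : ℕ → ℕ → ℕ → E2}
    {j a b : ℕ} (hL : DifferentiableAt ℝ L (jet φ j a b))
    (hinv : RotationInvariantAt L (jet φ j a b)) :
    slotAngularMomentum L φ j a b 0 + slotAngularMomentum L φ j a b 2 +
        slotAngularMomentum L φ j a b 4 + slotAngularMomentum L φ j a b 6 =
      -(slotAngularMomentum L φ j a b 1 + slotAngularMomentum L φ j a b 3 +
        slotAngularMomentum L φ j a b 5 + slotAngularMomentum L φ j a b 7) := by
  have h := sum_inner_pgrad_Jrot_eq_zero hL hinv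
  rw [Fin.sum_univ_eight] at h
  simp only [slotAngularMomentum]
  linarith

lemma jet_eq_of_cellNode_eq {φ : ℕ → ℕ → ℕ → E2} {j a b T a' b' : ℕ} {s : Fin 8}
    (h : cellNode j a b s = (T, a', b')) : jet φ j a b s = φ T a' b' := by
  simp only [cellNode, Prod.mk.injEq] at h
  simp only [jet, h]

lemma sum_range_sum_range_ite_cellNode_eq {M : Type*} [AddCommMonoid M] {A B j a b : ℕ}
    (ha : a < A) (hb : b < B) (s : Fin 8) (T : ℕ) (c : M) :
    ∑ a' ∈ range (A + 1), ∑ b' ∈ range (B + 1),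
        (if cellNode j a b s = (T, a', b') then c else 0) =
      if j + s.val % 2 = T then c else 0 := by
  have ha' : a + s.val / 2 % 2 < A + 1 := by omega
  have hb' : b + s.val / 4 < B + 1 := by omega
  by_cases hT : j + s.val % 2 = T <;> simp [cellNode, hT, ite_and, ha', hb']

lemma sum_fin_eight_ite_add_mod_two_eq {M : Type*} [AddCommMonoid M] (f : Fin 8 → M) (j T : ℕ) :
    ∑ s : Fin 8, (if j + s.val % 2 = T then f s else 0) =
      (if j + 1 = T then f 1 + f 3 + f 5 + f 7 else 0) +
        (if j = T then f 0 + f 2 + f 4 + f 6 else 0) := by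
  rw [Fin.sum_univ_eight]
  rcases eq_or_ne (j + 1) T with rfl | h1
  · simp
  rcases eq_or_ne j T with rfl | h0
  · simp
  · simp [h0, h1]

lemma sum_range_sum_fin_eight_ite_add_mod_two_eq {M : Type*} [AddCommMonoid M]
    (f : ℕ → Fin 8 → M) {N j : ℕ} (hj : j + 2 ≤ N) :
    ∑ j' ∈ range N, ∑ s : Fin 8, (if j' + s.val % 2 = j + 1 then f j' s else 0) =
      (f j 1 + f j 3 + f j 5 + f j 7) + (f (j + 1) 0 + f (j + 1) 2 + f (j + 1) 4 + f (j + 1) 6) := by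
  simp only [sum_fin_eight_ite_add_mod_two_eq, sum_add_distrib, add_left_inj]
  rw [sum_ite_eq', sum_ite_eq', if_pos (mem_range.2 (by omega)), if_pos (mem_range.2 (by omega))]

lemma sum_inner_delSum_Jrot (N A B : ℕ) (L : (Fin 8 → E2) → ℝ) (φ : ℕ → ℕ → ℕ → E2) (T : ℕ) :
    ∑ a ∈ range (A + 1), ∑ b ∈ range (B + 1), ⟪delSum N A B L φ (T, a, b), Jrot (φ T a b)⟫ =
      ∑ a' ∈ range A, ∑ b' ∈ range B, ∑ j' ∈ range N, ∑ s : Fin 8,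
        (if j' + s.val % 2 = T then slotAngularMomentum L φ j' a' b' s else 0) := by
  calc _ = ∑ a ∈ range (A + 1), ∑ b ∈ range (B + 1), ∑ j' ∈ range N, ∑ a' ∈ range A,
        ∑ b' ∈ range B, ∑ s : Fin 8,
          (if cellNode j' a' b' s = (T, a, b) then slotAngularMomentum L φ j' a' b' s else 0) := by
        simp only [delSum, sum_inner]
        refine sum_congr rfl fun a _ => sum_congr rfl fun b _ => sum_congr rfl fun j' _ =>
          sum_congr rfl fun a' _ => sum_congr rfl fun b' _ => sum_congr rfl fun s _ => ?_
        split_ifs with h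
        · rw [slotAngularMomentum, jet_eq_of_cellNode_eq h]
        · exact inner_zero_left _
    _ = ∑ a' ∈ range A, ∑ b' ∈ range B, ∑ j' ∈ range N, ∑ s : Fin 8,
        ∑ a ∈ range (A + 1), ∑ b ∈ range (B + 1),
          (if cellNode j' a' b' s = (T, a, b) then slotAngularMomentum L φ j' a' b' s else 0) := by
        -- every swap is oriented (node sums inward, time sum past the cell sums), so `simp` halts
        simp only [sum_comm (s := range (B + 1)) (t := range N),
          sum_comm (s := range (B + 1)) (t := range A), sum_comm (s := range (B + 1)) (t := range B),
          sum_comm (s := range (B + 1)) (t := (univ : Finset (Fin 8))),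
          sum_comm (s := range (A + 1)) (t := range N),
          sum_comm (s := range (A + 1)) (t := range A), sum_comm (s := range (A + 1)) (t := range B),
          sum_comm (s := range (A + 1)) (t := (univ : Finset (Fin 8))),
          sum_comm (s := range N) (t := range A), sum_comm (s := range N) (t := range B)]
    _ = _ :=
        sum_congr rfl fun a' ha' => sum_congr rfl fun b' hb' => sum_congr rfl fun _ _ =>
          sum_congr rfl fun s _ =>
            sum_range_sum_range_ite_cellNode_eq (mem_range.1 ha') (mem_range.1 hb') s T _

theorem discrete_noether_rotations_2D_general
    (N A B : ℕ)
    (L : (Fin 8 → E2) → ℝ) (hL : Differentiable ℝ L)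
    (hinv : ∀ (R : Matrix.specialOrthogonalGroup (Fin 2) ℝ) (x : Fin 8 → E2),
      L (fun p => Matrix.toEuclideanLin (R : Matrix (Fin 2) (Fin 2) ℝ) (x p)) = L x)
    (φ : ℕ → ℕ → ℕ → E2)
    (hDEL : ∀ j a b : ℕ, 0 < j → j < N → a ≤ A → b ≤ B →
      delSum N A B L φ (j, a, b) = 0) :
    ∀ j : ℕ, j + 2 ≤ N → Jang A B L φ (j + 1) = Jang A B L φ j := by
  intro j hj
  have hflux : ∑ a ∈ range (A + 1), ∑ b ∈ range (B + 1),
      ⟪delSum N A B L φ (j + 1, a, b), Jrot (φ (j + 1) a b)⟫ = 0 :=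
    sum_eq_zero fun a ha => sum_eq_zero fun b hb => by
      rw [hDEL (j + 1) a b j.succ_pos (by omega) (Nat.lt_succ_iff.1 (mem_range.1 ha))
        (Nat.lt_succ_iff.1 (mem_range.1 hb)), inner_zero_left]
  rw [sum_inner_delSum_Jrot] at hflux
  simp only [sum_range_sum_fin_eight_ite_add_mod_two_eq (slotAngularMomentum L φ · _ _) hj,
    slotAngularMomentum_even_eq_neg_odd (hL _) (hinv · _), ← sub_eq_add_neg,
    sum_sub_distrib] at hflux
  rw [Jang_eq_sum_slotAngularMomentum, Jang_eq_sum_slotAngularMomentum]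
  linarith

/-- **Discrete Noether theorem for rotations (2D)**: if the cell Lagrangian is invariant
under every rotation `R ∈ SO(2)` acting simultaneously on all its slots, and `φ`
satisfies the discrete Euler–Lagrange node equations at every node with `0 < j < N`,
then the total discrete angular momentum is conserved. -/
theorem discrete_noether_rotations_2D
    (N A B : ℕ) (hN : 1 ≤ N) (hA : 1 ≤ A) (hB : 1 ≤ B)
    (L : (Fin 8 → E2) → ℝ) (hL : Differentiable ℝ L)
    (hinv : ∀ (R : Matrix.specialOrthogonalGroup (Fin 2) ℝ) (x : Fin 8 → E2),
      L (fun p => Matrix.toEuclideanLin (R : Matrix (Fin 2) (Fin 2) ℝ) (x p)) = L x)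
    (φ : ℕ → ℕ → ℕ → E2)
    (hDEL : ∀ j a b : ℕ, 0 < j → j < N → a ≤ A → b ≤ B →
      delSum N A B L φ (j, a, b) = 0) :
    ∀ j : ℕ, j + 2 ≤ N → Jang A B L φ (j + 1) = Jang A B L φ j :=
  discrete_noether_rotations_2D_general N A B L hL hinv φ hDEL

end
end
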